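/- arXiv:1905.10325 — 2 statements merged into one kernel-verified Lean document; each statement's English description precedes it below -/
import Mathlib

section
/- Let {v_N} ⊂ L²_{ℝ^r}(Ω) be a sequence of mean-zero r-dimensional random vectors with E[v_N v_Nᵀ] = I_r that generates a Cauchy sequence of subspaces, meaning: writing the orthogonal decomposition v_M = A_{MN} v_N + ρ_{MN} (with ρ_{MN} uncorrelated with v_N), for every ε > 0 there exists M_ε such that trace(Cov(ρ_{MN})) < ε for all N, M > M_ε. Let Y ∈ L²_H(Ω) and Y_N = Proj_H(Y | v_N). Then {Y_N} converges in L²_H(Ω). -/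
/-!
For orthonormal `v`, `Y_N` is the orthogonal projection of `Y` onto the `H`-span of `v_N` in
`L²(μ; H)`, so `‖Y_N‖² = Σ_l ‖E[v_{N,l} Y]‖² ≤ ‖Y‖²` (Bessel). Expanding the inner products,
`⟪Y_M - Y_N, Y_M⟫ = Σ_l ⟪E[ρ_{MN,l} Y], E[v_{M,l} Y]⟫`, and two applications of Cauchy–Schwarz
together with Bessel bound this by `√(trace Cov ρ_{MN}) ‖Y‖²`. As
`‖Y_M - Y_N‖² = ⟪Y_M - Y_N, Y_M⟫ + ⟪Y_N - Y_M, Y_N⟫`, the sequence is Cauchy in the complete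
space `L²(μ; H)`.
-/

open MeasureTheory Filter Topology
open scoped InnerProductSpace

section SmulConst

variable {Ω H : Type*} [MeasurableSpace Ω] {μ : Measure Ω}
  [NormedAddCommGroup H] [InnerProductSpace ℝ H]

theorem L2.norm_sq_eq_integral_norm_sq (f : Lp H 2 μ) : ‖f‖ ^ 2 = ∫ ω, ‖f ω‖ ^ 2 ∂μ := by
  simp_rw [← real_inner_self_eq_norm_sq, L2.inner_def]

theorem integrable_smul_of_memLp_two {a : Ω → ℝ} {Y : Ω → H} (ha : MemLp a 2 μ)
    (hY : MemLp Y 2 μ) : Integrable (fun ω => a ω • Y ω) μ :=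
  memLp_one_iff_integrable.1 (hY.smul ha)

noncomputable def smulConstLp {a : Ω → ℝ} (ha : MemLp a 2 μ) (x : H) : Lp H 2 μ :=
  MemLp.toLp (fun ω => a ω • x) ((memLp_top_const x).smul ha)

variable {a b : Ω → ℝ}

theorem coeFn_smulConstLp (ha : MemLp a 2 μ) (x : H) :
    smulConstLp ha x =ᵐ[μ] fun ω => a ω • x :=
  MemLp.coeFn_toLp _

theorem inner_smulConstLp_smulConstLp (ha : MemLp a 2 μ) (hb : MemLp b 2 μ) (x y : H) :
    ⟪smulConstLp ha x, smulConstLp hb y⟫_ℝ = (∫ ω, a ω * b ω ∂μ) * ⟪x, y⟫_ℝ := by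
  rw [L2.inner_def, ← integral_mul_const]
  refine integral_congr_ae ?_
  filter_upwards [coeFn_smulConstLp ha x, coeFn_smulConstLp hb y] with ω hx hy
  rw [hx, hy, real_inner_smul_left, real_inner_smul_right, mul_assoc]

theorem norm_smulConstLp (ha : MemLp a 2 μ) (x : H) :
    ‖smulConstLp ha x‖ = √(∫ ω, a ω ^ 2 ∂μ) * ‖x‖ := by
  rw [← Real.sqrt_sq (norm_nonneg (smulConstLp ha x)), ← real_inner_self_eq_norm_sq,
    inner_smulConstLp_smulConstLp, real_inner_self_eq_norm_sq,
    Real.sqrt_mul (integral_nonneg fun ω => mul_self_nonneg (a ω)), Real.sqrt_sq (norm_nonneg x)]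
  simp_rw [sq]

variable [CompleteSpace H] {Y : Ω → H}

theorem inner_toLp_smulConstLp (hY : MemLp Y 2 μ) (ha : MemLp a 2 μ) (x : H) :
    ⟪hY.toLp Y, smulConstLp ha x⟫_ℝ = ⟪∫ ω, a ω • Y ω ∂μ, x⟫_ℝ := by
  rw [L2.inner_def, real_inner_comm, ← integral_inner (integrable_smul_of_memLp_two ha hY)]
  refine integral_congr_ae ?_
  filter_upwards [hY.coeFn_toLp, coeFn_smulConstLp ha x] with ω hY' hx
  rw [hY', hx, real_inner_smul_right, real_inner_smul_right, real_inner_comm]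

theorem norm_integral_smul_le (hY : MemLp Y 2 μ) (ha : MemLp a 2 μ) :
    ‖∫ ω, a ω • Y ω ∂μ‖ ≤ √(∫ ω, a ω ^ 2 ∂μ) * ‖hY.toLp Y‖ := by
  set x := ∫ ω, a ω • Y ω ∂μ
  have h : ‖x‖ * ‖x‖ ≤ (√(∫ ω, a ω ^ 2 ∂μ) * ‖hY.toLp Y‖) * ‖x‖ :=
    calc ‖x‖ * ‖x‖ = ⟪hY.toLp Y, smulConstLp ha x⟫_ℝ := by
          rw [inner_toLp_smulConstLp, real_inner_self_eq_norm_mul_norm]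
      _ ≤ ‖hY.toLp Y‖ * ‖smulConstLp ha x‖ := real_inner_le_norm _ _
      _ = _ := by rw [norm_smulConstLp]; ring
  rcases (norm_nonneg x).eq_or_lt with h0 | h0
  · rw [← h0]; positivity
  · exact le_of_mul_le_mul_right h h0

end SmulConst

section Projection

variable {Ω H : Type*} [MeasurableSpace Ω] {μ : Measure Ω}
  [NormedAddCommGroup H] [InnerProductSpace ℝ H] {ι κ : Type*} [Fintype κ]
  {v : ι → Ω → ℝ} {w : κ → Ω → ℝ} {Y : Ω → H}

open Finset

/-- The paper's `ρ_{MN}` for `v = v_M`, `w = v_N`. -/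
noncomputable def projResidual (μ : Measure Ω) (v : ι → Ω → ℝ) (w : κ → Ω → ℝ) (i : ι) (ω : Ω) :
    ℝ :=
  v i ω - ∑ k, (∫ ω', v i ω' * w k ω' ∂μ) * w k ω

theorem memLp_projResidual (hv : ∀ i, MemLp (v i) 2 μ) (hw : ∀ k, MemLp (w k) 2 μ) (i : ι) :
    MemLp (projResidual μ v w i) 2 μ :=
  (hv i).sub (memLp_finsetSum _ fun k _ => (hw k).const_mul _)

theorem integral_projResidual_smul (hY : MemLp Y 2 μ) (hv : ∀ i, MemLp (v i) 2 μ)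
    (hw : ∀ k, MemLp (w k) 2 μ) (i : ι) :
    ∫ ω, projResidual μ v w i ω • Y ω ∂μ = ∫ ω, v i ω • Y ω ∂μ -
      ∑ k, (∫ ω, v i ω * w k ω ∂μ) • ∫ ω, w k ω • Y ω ∂μ := by
  have hint : ∀ k ∈ univ,
      Integrable (fun ω => (∫ ω', v i ω' * w k ω' ∂μ) • (w k ω • Y ω)) μ :=
    fun k _ => (integrable_smul_of_memLp_two (hw k) hY).smul _
  simp_rw [projResidual, sub_smul, sum_smul, mul_smul]
  rw [integral_sub (integrable_smul_of_memLp_two (hv i) hY) (integrable_finsetSum _ hint),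
    integral_finsetSum _ hint]
  simp_rw [integral_smul]

variable [Fintype ι]

/-- `Proj_H(Y | v)` when `v` is orthonormal in `L²(μ)`. -/
noncomputable def projL2 (v : ι → Ω → ℝ) (hv : ∀ i, MemLp (v i) 2 μ) (Y : Ω → H) : Lp H 2 μ :=
  ∑ i, smulConstLp (hv i) (∫ ω, v i ω • Y ω ∂μ)

theorem coeFn_projL2 (hv : ∀ i, MemLp (v i) 2 μ) (Y : Ω → H) :
    projL2 v hv Y =ᵐ[μ] fun ω => ∑ i, v i ω • ∫ ω', v i ω' • Y ω' ∂μ := by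
  filter_upwards [Lp.coeFn_fun_finsetSum univ fun i => smulConstLp (hv i) (∫ ω, v i ω • Y ω ∂μ),
    ae_all_iff.2 fun i => coeFn_smulConstLp (hv i) (∫ ω, v i ω • Y ω ∂μ)] with ω hsum hterm
  rw [projL2, hsum]
  exact sum_congr rfl fun i _ => hterm i

theorem inner_projL2_projL2 (hv : ∀ i, MemLp (v i) 2 μ) (hw : ∀ k, MemLp (w k) 2 μ)
    (Y : Ω → H) :
    ⟪projL2 v hv Y, projL2 w hw Y⟫_ℝ = ∑ i, ∑ k, (∫ ω, v i ω * w k ω ∂μ) *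
      ⟪∫ ω, v i ω • Y ω ∂μ, ∫ ω, w k ω • Y ω ∂μ⟫_ℝ := by
  simp only [projL2, sum_inner, inner_sum, inner_smulConstLp_smulConstLp]
  exact sum_comm

theorem norm_projL2_sq [DecidableEq ι]
    (hvI : ∀ i j, ∫ ω, v i ω * v j ω ∂μ = if i = j then 1 else 0)
    (hv : ∀ i, MemLp (v i) 2 μ) (Y : Ω → H) :
    ‖projL2 v hv Y‖ ^ 2 = ∑ i, ‖∫ ω, v i ω • Y ω ∂μ‖ ^ 2 := by
  rw [← real_inner_self_eq_norm_sq, inner_projL2_projL2]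
  simp [hvI]

theorem inner_sub_projL2_self [DecidableEq ι]
    (hvI : ∀ i j, ∫ ω, v i ω * v j ω ∂μ = if i = j then 1 else 0)
    (hY : MemLp Y 2 μ) (hv : ∀ i, MemLp (v i) 2 μ) (hw : ∀ k, MemLp (w k) 2 μ) :
    ⟪projL2 v hv Y - projL2 w hw Y, projL2 v hv Y⟫_ℝ =
      ∑ i, ⟪∫ ω, projResidual μ v w i ω • Y ω ∂μ, ∫ ω, v i ω • Y ω ∂μ⟫_ℝ := by
  rw [inner_sub_left, real_inner_self_eq_norm_sq, norm_projL2_sq hvI, inner_projL2_projL2,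
    sum_comm, ← sum_sub_distrib]
  refine sum_congr rfl fun i _ => ?_
  rw [integral_projResidual_smul hY hv hw, inner_sub_left, sum_inner, real_inner_self_eq_norm_sq]
  simp_rw [real_inner_smul_left, mul_comm (w _ _)]

variable [CompleteSpace H]

theorem inner_toLp_projL2 (hY : MemLp Y 2 μ) (hv : ∀ i, MemLp (v i) 2 μ) :
    ⟪hY.toLp Y, projL2 v hv Y⟫_ℝ = ∑ i, ‖∫ ω, v i ω • Y ω ∂μ‖ ^ 2 := by
  simp only [projL2, inner_sum, inner_toLp_smulConstLp, real_inner_self_eq_norm_sq]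

theorem sum_norm_integral_smul_sq_le [DecidableEq ι]
    (hvI : ∀ i j, ∫ ω, v i ω * v j ω ∂μ = if i = j then 1 else 0)
    (hY : MemLp Y 2 μ) (hv : ∀ i, MemLp (v i) 2 μ) :
    ∑ i, ‖∫ ω, v i ω • Y ω ∂μ‖ ^ 2 ≤ ‖hY.toLp Y‖ ^ 2 := by
  have h := norm_sub_sq_real (hY.toLp Y) (projL2 v hv Y)
  rw [inner_toLp_projL2, norm_projL2_sq hvI] at h
  nlinarith [sq_nonneg ‖hY.toLp Y - projL2 v hv Y‖]

theorem inner_sub_projL2_self_le [DecidableEq ι]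
    (hvI : ∀ i j, ∫ ω, v i ω * v j ω ∂μ = if i = j then 1 else 0)
    (hY : MemLp Y 2 μ) (hv : ∀ i, MemLp (v i) 2 μ) (hw : ∀ k, MemLp (w k) 2 μ) :
    ⟪projL2 v hv Y - projL2 w hw Y, projL2 v hv Y⟫_ℝ ≤
      √(∫ ω, ∑ i, projResidual μ v w i ω ^ 2 ∂μ) * ‖hY.toLp Y‖ ^ 2 := by
  set y := ‖hY.toLp Y‖
  set c := fun i => ∫ ω, v i ω • Y ω ∂μ
  have hρ := memLp_projResidual hv hw
  rw [inner_sub_projL2_self hvI hY hv hw]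
  calc ∑ i, ⟪∫ ω, projResidual μ v w i ω • Y ω ∂μ, c i⟫_ℝ
      ≤ ∑ i, √(∫ ω, projResidual μ v w i ω ^ 2 ∂μ) * √(‖c i‖ ^ 2) * y := by
        refine sum_le_sum fun i _ => ?_
        rw [Real.sqrt_sq (norm_nonneg _)]
        calc _ ≤ ‖∫ ω, projResidual μ v w i ω • Y ω ∂μ‖ * ‖c i‖ := real_inner_le_norm _ _
          _ ≤ (√(∫ ω, projResidual μ v w i ω ^ 2 ∂μ) * y) * ‖c i‖ := by
            gcongr; exact norm_integral_smul_le hY (hρ i)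
          _ = _ := by ring
    _ ≤ √(∑ i, ∫ ω, projResidual μ v w i ω ^ 2 ∂μ) * √(∑ i, ‖c i‖ ^ 2) * y := by
        rw [← sum_mul]
        gcongr
        exact Real.sum_sqrt_mul_sqrt_le _ (fun i => integral_nonneg fun ω => sq_nonneg _)
          (fun i => sq_nonneg _)
    _ ≤ √(∫ ω, ∑ i, projResidual μ v w i ω ^ 2 ∂μ) * y * y := by
        rw [← integral_finsetSum _ fun i _ => (hρ i).integrable_sq]
        gcongr
        calc √(∑ i, ‖c i‖ ^ 2) ≤ √(y ^ 2) :=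
              Real.sqrt_le_sqrt (sum_norm_integral_smul_sq_le hvI hY hv)
          _ = y := Real.sqrt_sq (norm_nonneg _)
    _ = _ := by ring

theorem norm_projL2_sub_sq_le [DecidableEq ι] [DecidableEq κ]
    (hvI : ∀ i j, ∫ ω, v i ω * v j ω ∂μ = if i = j then 1 else 0)
    (hwI : ∀ k l, ∫ ω, w k ω * w l ω ∂μ = if k = l then 1 else 0)
    (hY : MemLp Y 2 μ) (hv : ∀ i, MemLp (v i) 2 μ) (hw : ∀ k, MemLp (w k) 2 μ) :
    ‖projL2 v hv Y - projL2 w hw Y‖ ^ 2 ≤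
      (√(∫ ω, ∑ i, projResidual μ v w i ω ^ 2 ∂μ) +
        √(∫ ω, ∑ k, projResidual μ w v k ω ^ 2 ∂μ)) * ‖hY.toLp Y‖ ^ 2 := by
  have hsplit : ∀ f g : Lp H 2 μ, ‖f - g‖ ^ 2 = ⟪f - g, f⟫_ℝ + ⟪g - f, g⟫_ℝ := fun f g => by
    rw [← real_inner_self_eq_norm_sq]
    simp only [inner_sub_left, inner_sub_right, real_inner_comm f g]
    ring
  rw [hsplit, add_mul]
  exact add_le_add (inner_sub_projL2_self_le hvI hY hv hw) (inner_sub_projL2_self_le hwI hY hw hv)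

end Projection

theorem tendsto_prod_atTop_of_forall_lt {t : ℕ → ℕ → ℝ} (ht0 : ∀ M N, 0 ≤ t M N)
    (ht : ∀ ε > 0, ∃ K : ℕ, ∀ M N, K < M → K < N → t M N < ε) :
    Tendsto (fun p : ℕ × ℕ => t p.1 p.2) atTop (𝓝 0) := by
  refine Metric.tendsto_atTop.2 fun ε hε => ?_
  obtain ⟨K, hK⟩ := ht ε hε
  refine ⟨(K + 1, K + 1), fun p hp => ?_⟩
  rw [Real.dist_0_eq_abs, abs_of_nonneg (ht0 _ _)]
  exact hK _ _ hp.1 hp.2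

theorem cauchySeq_projL2 {Ω H : Type*} [MeasurableSpace Ω] {μ : Measure Ω}
    [NormedAddCommGroup H] [InnerProductSpace ℝ H] [CompleteSpace H]
    {ι : Type*} [Fintype ι] [DecidableEq ι] {v : ℕ → ι → Ω → ℝ} {Y : Ω → H}
    (hv : ∀ N i, MemLp (v N i) 2 μ)
    (hvI : ∀ N i j, ∫ ω, v N i ω * v N j ω ∂μ = if i = j then 1 else 0)
    (hcauchy : ∀ ε > 0, ∃ K : ℕ, ∀ M N, K < M → K < N →
      ∫ ω, ∑ i, projResidual μ (v M) (v N) i ω ^ 2 ∂μ < ε)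
    (hY : MemLp Y 2 μ) :
    CauchySeq fun N => projL2 (v N) (hv N) Y := by
  set t : ℕ → ℕ → ℝ := fun M N => ∫ ω, ∑ i, projResidual μ (v M) (v N) i ω ^ 2 ∂μ
  have ht0 : ∀ M N, 0 ≤ t M N := fun M N =>
    integral_nonneg fun ω => Finset.sum_nonneg fun i _ => sq_nonneg _
  have ht := tendsto_prod_atTop_of_forall_lt ht0 hcauchy
  have ht' := tendsto_prod_atTop_of_forall_lt (fun M N => ht0 N M) fun ε hε =>
    (hcauchy ε hε).imp fun K hK M N hM hN => hK N M hN hM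
  rw [cauchySeq_iff_tendsto_dist_atTop_0]
  refine squeeze_zero (fun _ => dist_nonneg) (fun p => ?_)
    (((ht.sqrt.add ht'.sqrt).sqrt.mul_const ‖hY.toLp Y‖).trans_eq (by simp))
  rw [dist_eq_norm, ← Real.sqrt_sq (norm_nonneg _), ← Real.sqrt_sq (norm_nonneg (hY.toLp Y)),
    ← Real.sqrt_mul (by positivity)]
  exact Real.sqrt_le_sqrt (norm_projL2_sub_sq_le (hvI _) (hvI _) hY (hv _) (hv _))

theorem stmt12_general {Ω : Type*} [MeasurableSpace Ω] (μ : Measure Ω)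
    {H : Type*} [NormedAddCommGroup H] [InnerProductSpace ℝ H] [CompleteSpace H]
    (r : ℕ) (v : ℕ → Ω → Fin r → ℝ)
    (hv2 : ∀ N l, MemLp (fun ω => v N ω l) 2 μ)
    (hvI : ∀ N l k, ∫ ω, v N ω l * v N ω k ∂μ = if l = k then 1 else 0)
    (hcauchy : ∀ ε > 0, ∃ Mε : ℕ, ∀ M N, Mε < M → Mε < N →
      ∫ ω, ∑ l, (v M ω l - ∑ k, (∫ ω', v M ω' l * v N ω' k ∂μ) * v N ω k) ^ 2 ∂μ < ε)
    (Y : Ω → H) (hY : MemLp Y 2 μ)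
    (Yproj : ℕ → Ω → H)
    (hYproj : ∀ N ω, Yproj N ω = ∑ l, v N ω l • (∫ ω', v N ω' l • Y ω' ∂μ)) :
    ∃ Z : Ω → H, MemLp Z 2 μ ∧
      Tendsto (fun N => ∫ ω, ‖Yproj N ω - Z ω‖ ^ 2 ∂μ) atTop (nhds 0) := by
  set F := fun N => projL2 (fun l ω => v N ω l) (hv2 N) Y
  obtain ⟨Z, hZ⟩ := cauchySeq_tendsto_of_complete (cauchySeq_projL2 hv2 hvI hcauchy hY)
  refine ⟨Z, Lp.memLp Z, ?_⟩
  have hF : ∀ N, F N =ᵐ[μ] Yproj N := fun N =>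
    (coeFn_projL2 _ _).trans (ae_of_all _ fun ω => (hYproj N ω).symm)
  have hsq : Tendsto (fun N => ‖F N - Z‖ ^ 2) atTop (𝓝 0) := by
    simpa using (tendsto_iff_norm_sub_tendsto_zero.1 hZ).pow 2
  refine hsq.congr fun N => ?_
  rw [L2.norm_sq_eq_integral_norm_sq]
  refine integral_congr_ae ?_
  filter_upwards [Lp.coeFn_sub (F N) Z, hF N] with ω hsub hFN
  rw [hsub, Pi.sub_apply, hFN]

/-- If `{v_N}` (mean zero, `E[v_N v_Nᵀ] = I_r`) generates a Cauchy sequence of subspaces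
(the residual `ρ_{MN} = v_M - E[v_M v_Nᵀ] v_N` of the orthogonal decomposition has
`trace Cov(ρ_{MN}) < ε` for all `M, N` large), then the projections
`Y_N = Proj_H(Y | v_N) = Σ_l E[v_{N,l} Y] v_{N,l}` converge in `L²_H(Ω)`. -/
theorem stmt12 {Ω : Type*} [MeasurableSpace Ω] (μ : Measure Ω) [IsProbabilityMeasure μ]
    {H : Type*} [NormedAddCommGroup H] [InnerProductSpace ℝ H] [CompleteSpace H]
    [TopologicalSpace.SeparableSpace H]
    (r : ℕ) (v : ℕ → Ω → Fin r → ℝ)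
    (hv2 : ∀ N l, MemLp (fun ω => v N ω l) 2 μ)
    (hvmean : ∀ N l, ∫ ω, v N ω l ∂μ = 0)
    (hvI : ∀ N l k, ∫ ω, v N ω l * v N ω k ∂μ = if l = k then 1 else 0)
    (hcauchy : ∀ ε > 0, ∃ Mε : ℕ, ∀ M N, Mε < M → Mε < N →
      ∫ ω, ∑ l, (v M ω l - ∑ k, (∫ ω', v M ω' l * v N ω' k ∂μ) * v N ω k) ^ 2 ∂μ < ε)
    (Y : Ω → H) (hY : MemLp Y 2 μ)
    (Yproj : ℕ → Ω → H)
    (hYproj : ∀ N ω, Yproj N ω = ∑ l, v N ω l • (∫ ω', v N ω' l • Y ω' ∂μ)) :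
    ∃ Z : Ω → H, MemLp Z 2 μ ∧
      Tendsto (fun N => ∫ ω, ‖Yproj N ω - Z ω‖ ^ 2 ∂μ) atTop (nhds 0) :=
  stmt12_general μ r v hv2 hvI hcauchy Y hY Yproj hYproj
end

section
/- Suppose E[u_t u_tᵀ] = Σ_u ∈ ℝ^{r×r} is positive definite, {b_{il}} ⊂ H_i satisfy N^{-1} Σ_{i=1}^N ⟨b_{il}, b_{ik}⟩ → (Σ_B)_{lk} with Σ_B positive definite, E[u_t ⊗ ξ_t] = 0, E‖ξ_t‖² < ∞. Then the r-th largest eigenvalue of Cov(x_t) = B_N Σ_u B_N* + E[ξ_t ⊗ ξ_t] satisfies λ_r[Cov(x_t)] ≥ λ_r[Σ_u] · λ_r[B_N* B_N], which diverges at rate N as N → ∞. -/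
open scoped RealInnerProductSpace
open Filter

/-- The `i`-th largest eigenvalue (1-indexed) of an operator on a real Hilbert space,
via the Courant–Fischer–Weyl minimax characterization. -/
noncomputable def nthEig {H : Type*} [NormedAddCommGroup H] [InnerProductSpace ℝ H]
    (T : H →L[ℝ] H) (i : ℕ) : ℝ :=
  ⨆ V : {V : Submodule ℝ H // Module.finrank ℝ V = i},
    ⨅ x : {x : H // x ∈ V.1 ∧ ‖x‖ = 1}, ⟪T x.1, x.1⟫

section helpers
variable {H : Type*} [NormedAddCommGroup H] [InnerProductSpace ℝ H]

lemma quad_abs_le (T : H →L[ℝ] H) {x : H} (hx : ‖x‖ = 1) : |⟪T x, x⟫| ≤ ‖T‖ := by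
  calc |⟪T x, x⟫| ≤ ‖T x‖ * ‖x‖ := abs_real_inner_le_norm _ _
  _ ≤ (‖T‖ * ‖x‖) * ‖x‖ := by
      exact mul_le_mul_of_nonneg_right (T.le_opNorm x) (norm_nonneg _)
  _ = ‖T‖ := by rw [hx]; ring

lemma infQ_bddBelow (T : H →L[ℝ] H) (V : Submodule ℝ H) :
    BddBelow (Set.range fun x : {x : H // x ∈ V ∧ ‖x‖ = 1} => ⟪T x.1, x.1⟫) := by
  refine ⟨-‖T‖, ?_⟩
  rintro _ ⟨x, rfl⟩
  have := abs_le.mp (quad_abs_le T x.2.2)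
  linarith [this.1]

lemma unit_exists {V : Submodule ℝ H} (hV : V ≠ ⊥) : ∃ x, x ∈ V ∧ ‖x‖ = 1 := by
  obtain ⟨v, hv, hv0⟩ := Submodule.exists_mem_ne_zero_of_ne_bot hV
  have hn : ‖v‖ ≠ 0 := norm_ne_zero_iff.mpr hv0
  exact ⟨‖v‖⁻¹ • v, V.smul_mem _ hv, by
    rw [norm_smul, norm_inv, norm_norm, inv_mul_cancel₀ hn]⟩

lemma V_ne_bot {V : Submodule ℝ H} {i : ℕ} (hi : 0 < i) (hV : Module.finrank ℝ V = i) :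
    V ≠ ⊥ := by
  rintro rfl
  rw [finrank_bot] at hV
  omega

lemma nthEig_bddAbove (T : H →L[ℝ] H) {i : ℕ} (hi : 0 < i) :
    BddAbove (Set.range fun V : {V : Submodule ℝ H // Module.finrank ℝ V = i} =>
      ⨅ x : {x : H // x ∈ V.1 ∧ ‖x‖ = 1}, ⟪T x.1, x.1⟫) := by
  refine ⟨‖T‖, ?_⟩
  rintro _ ⟨V, rfl⟩
  obtain ⟨x, hxV, hx1⟩ := unit_exists (V_ne_bot hi V.2)
  refine le_trans (ciInf_le (infQ_bddBelow T V.1) ⟨x, hxV, hx1⟩) ?_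
  exact (abs_le.mp (quad_abs_le T hx1)).2

lemma le_nthEig (T : H →L[ℝ] H) {i : ℕ} (hi : 0 < i) (V : Submodule ℝ H)
    (hV : Module.finrank ℝ V = i) {c : ℝ}
    (hc : ∀ x ∈ V, ‖x‖ = 1 → c ≤ ⟪T x, x⟫) : c ≤ nthEig T i := by
  obtain ⟨x, hxV, hx1⟩ := unit_exists (V_ne_bot hi hV)
  haveI : Nonempty {x : H // x ∈ V ∧ ‖x‖ = 1} := ⟨⟨x, hxV, hx1⟩⟩
  exact le_ciSup_of_le (nthEig_bddAbove T hi) ⟨V, hV⟩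
    (le_ciInf fun x => hc x.1 x.2.1 x.2.2)

lemma nthEig_nonneg (T : H →L[ℝ] H) (hT : ∀ x, 0 ≤ ⟪T x, x⟫) {i : ℕ} (hi : 0 < i) :
    0 ≤ nthEig T i := by
  by_cases h : Nonempty {V : Submodule ℝ H // Module.finrank ℝ V = i}
  · obtain ⟨V⟩ := h
    exact le_nthEig T hi V.1 V.2 fun x _ _ => hT x
  · haveI := not_nonempty_iff.mp h
    rw [nthEig, Real.iSup_of_isEmpty]

end helpers

section findim
variable {r : ℕ}
local notation "E" => EuclideanSpace ℝ (Fin r)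

noncomputable def uniqueV (hr : 0 < r) :
    Unique {V : Submodule ℝ (EuclideanSpace ℝ (Fin r)) // Module.finrank ℝ V = r} where
  default := ⟨⊤, by simp [finrank_top, finrank_euclideanSpace_fin]⟩
  uniq := fun V => Subtype.ext (Submodule.eq_top_of_finrank_eq
    (by rw [V.2, finrank_euclideanSpace_fin]))

lemma nthEig_findim (hr : 0 < r) (T : E →L[ℝ] E) :
    nthEig T r = ⨅ x : {x : E // x ∈ (⊤ : Submodule ℝ E) ∧ ‖x‖ = 1}, ⟪T x.1, x.1⟫ := by
  letI := uniqueV hr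
  rw [nthEig, ciSup_unique]
  with_unfolding_all rfl

lemma nthEig_le_quad (hr : 0 < r) (T : E →L[ℝ] E) {z : E} (hz : ‖z‖ = 1) :
    nthEig T r ≤ ⟪T z, z⟫ := by
  rw [nthEig_findim hr]
  exact ciInf_le (infQ_bddBelow T ⊤) ⟨z, Submodule.mem_top, hz⟩

lemma nthEig_quad_lb (hr : 0 < r) (T : E →L[ℝ] E) (z : E) :
    nthEig T r * ‖z‖ ^ 2 ≤ ⟪T z, z⟫ := by
  rcases eq_or_ne z 0 with rfl | hz
  · simp
  · have hn : ‖z‖ ≠ 0 := norm_ne_zero_iff.mpr hz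
    have hu : ‖(‖z‖⁻¹ • z)‖ = 1 := by
      rw [norm_smul, norm_inv, norm_norm, inv_mul_cancel₀ hn]
    have h := nthEig_le_quad hr T hu
    rw [map_smul, real_inner_smul_left, real_inner_smul_right] at h
    have hpos : (0:ℝ) < ‖z‖ := (norm_pos_iff).mpr hz
    have := mul_le_mul_of_nonneg_left h (by positivity : (0:ℝ) ≤ ‖z‖^2)
    calc nthEig T r * ‖z‖ ^ 2 = ‖z‖^2 * nthEig T r := by ring
    _ ≤ ‖z‖^2 * (‖z‖⁻¹ * (‖z‖⁻¹ * ⟪T z, z⟫)) := this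
    _ = ⟪T z, z⟫ := by field_simp

lemma ge_nthEig_findim (hr : 0 < r) (T : E →L[ℝ] E) {c : ℝ}
    (hc : ∀ z : E, ‖z‖ = 1 → c ≤ ⟪T z, z⟫) : c ≤ nthEig T r := by
  refine le_nthEig T hr ⊤ (by simp [finrank_top, finrank_euclideanSpace_fin]) ?_
  exact fun x _ hx => hc x hx

lemma exists_unit (hr : 0 < r) : ∃ z : E, ‖z‖ = 1 :=
  ⟨EuclideanSpace.single ⟨0, hr⟩ (1:ℝ), by simp⟩

lemma exists_pos_lb (hr : 0 < r) (T : E →L[ℝ] E)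
    (hpd : ∀ z : E, z ≠ 0 → 0 < ⟪T z, z⟫) :
    ∃ b > 0, ∀ z : E, ‖z‖ = 1 → b ≤ ⟪T z, z⟫ := by
  obtain ⟨z₀, hz₀⟩ := exists_unit hr
  have hne : (Metric.sphere (0:E) 1).Nonempty := ⟨z₀, by simpa using hz₀⟩
  have hcont : ContinuousOn (fun x : E => ⟪T x, x⟫) (Metric.sphere 0 1) :=
    (T.continuous.inner continuous_id).continuousOn
  obtain ⟨x, hx, hmin⟩ := (isCompact_sphere (0:E) 1).exists_isMinOn hne hcont
  have hx1 : ‖x‖ = 1 := by simpa using hx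
  refine ⟨⟪T x, x⟫, hpd x (by intro h; rw [h] at hx1; simp at hx1), ?_⟩
  intro z hz
  exact hmin (by simpa using hz)

lemma nthEig_pos_of_pd (hr : 0 < r) (T : E →L[ℝ] E)
    (hpd : ∀ z : E, z ≠ 0 → 0 < ⟪T z, z⟫) : 0 < nthEig T r := by
  obtain ⟨b, hb, hlb⟩ := exists_pos_lb hr T hpd
  exact lt_of_lt_of_le hb (ge_nthEig_findim hr T hlb)

end findim

section bilin
variable {r : ℕ} {F : Type*} [NormedAddCommGroup F] [InnerProductSpace ℝ F]
local notation "E" => EuclideanSpace ℝ (Fin r)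

lemma abs_coord_le (z : E) (l : Fin r) : |z l| ≤ ‖z‖ := by
  have h := abs_real_inner_le_norm z (EuclideanSpace.single l (1:ℝ))
  rw [EuclideanSpace.inner_single_right] at h
  simpa using h

lemma euclid_decomp (z : E) : z = ∑ l, z l • EuclideanSpace.single l (1:ℝ) := by
  ext k
  show z k = (EuclideanSpace.proj k) (∑ l, z l • EuclideanSpace.single l (1:ℝ))
  rw [map_sum]
  simp [EuclideanSpace.single_apply]

lemma bilin_expand (L M : E →L[ℝ] F) (z w : E) :
    ⟪L z, M w⟫ = ∑ l, ∑ k, z l * w k *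
      ⟪L (EuclideanSpace.single l (1:ℝ)), M (EuclideanSpace.single k (1:ℝ))⟫ := by
  conv_lhs => rw [euclid_decomp z, euclid_decomp w]
  rw [map_sum, map_sum, sum_inner]
  refine Finset.sum_congr rfl fun l _ => ?_
  rw [inner_sum]
  refine Finset.sum_congr rfl fun k _ => ?_
  rw [map_smul, map_smul, real_inner_smul_left, real_inner_smul_right]
  ring

end bilin

set_option maxHeartbeats 1000000 in
/-- If `Σ_u` is positive definite, the loadings satisfy `N⁻¹ B_N* B_N → Σ_B` positive
definite, and the idiosyncratic covariance `Ξ_N` is PSD, then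
`λ_r[Cov(x_t)] = λ_r[B_N Σ_u B_N* + Ξ_N] ≥ λ_r[Σ_u]·λ_r[B_N* B_N]`, which diverges
at rate `N`. -/
theorem stmt16 {r : ℕ} (hr : 0 < r) (HN : ℕ → Type*)
    [∀ N, NormedAddCommGroup (HN N)] [∀ N, InnerProductSpace ℝ (HN N)]
    [∀ N, CompleteSpace (HN N)]
    (B : ∀ N, EuclideanSpace ℝ (Fin r) →L[ℝ] HN N)
    (Su : EuclideanSpace ℝ (Fin r) →L[ℝ] EuclideanSpace ℝ (Fin r))
    (hSu_sa : IsSelfAdjoint Su)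
    (hSu_pd : ∀ z : EuclideanSpace ℝ (Fin r), z ≠ 0 → 0 < ⟪Su z, z⟫)
    (Ξ : ∀ N, HN N →L[ℝ] HN N) (hΞ_sa : ∀ N, IsSelfAdjoint (Ξ N))
    (hΞ_pos : ∀ N (v : HN N), 0 ≤ ⟪Ξ N v, v⟫)
    (SB : EuclideanSpace ℝ (Fin r) →L[ℝ] EuclideanSpace ℝ (Fin r))
    (hSB_pd : ∀ z : EuclideanSpace ℝ (Fin r), z ≠ 0 → 0 < ⟪SB z, z⟫)
    (hBlim : ∀ z w : EuclideanSpace ℝ (Fin r),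
      Tendsto (fun N : ℕ => ⟪B N z, B N w⟫ / N) atTop (nhds ⟪SB z, w⟫)) :
    (∀ N, nthEig Su r * nthEig (ContinuousLinearMap.adjoint (B N) ∘L B N) r ≤
        nthEig (B N ∘L Su ∘L ContinuousLinearMap.adjoint (B N) + Ξ N) r) ∧
      ∃ c > 0, ∃ N₀ : ℕ, ∀ N ≥ N₀,
        c * N ≤ nthEig (B N ∘L Su ∘L ContinuousLinearMap.adjoint (B N) + Ξ N) r := by
  have hSu_psd : ∀ y : EuclideanSpace ℝ (Fin r), 0 ≤ ⟪Su y, y⟫ := by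
    intro y
    rcases eq_or_ne y 0 with rfl | h
    · simp
    · exact (hSu_pd y h).le
  have ha : 0 < nthEig Su r := nthEig_pos_of_pd hr Su hSu_pd
  have hGq : ∀ N (z w : EuclideanSpace ℝ (Fin r)),
      ⟪(ContinuousLinearMap.adjoint (B N) ∘L B N) z, w⟫ = ⟪B N z, B N w⟫ := by
    intro N z w
    rw [ContinuousLinearMap.comp_apply, ContinuousLinearMap.adjoint_inner_left]
  have hAq : ∀ N (x : HN N),
      ⟪(B N ∘L Su ∘L ContinuousLinearMap.adjoint (B N) + Ξ N) x, x⟫ =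
        ⟪Su (ContinuousLinearMap.adjoint (B N) x), ContinuousLinearMap.adjoint (B N) x⟫
          + ⟪Ξ N x, x⟫ := by
    intro N x
    rw [ContinuousLinearMap.add_apply, inner_add_left, ContinuousLinearMap.comp_apply,
      ContinuousLinearMap.comp_apply]
    congr 1
    rw [← ContinuousLinearMap.adjoint_inner_right]
  have hA_psd : ∀ N (x : HN N),
      0 ≤ ⟪(B N ∘L Su ∘L ContinuousLinearMap.adjoint (B N) + Ξ N) x, x⟫ := by
    intro N x
    rw [hAq]
    exact add_nonneg (hSu_psd _) (hΞ_pos N x)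
  have hmain : ∀ N, nthEig Su r * nthEig (ContinuousLinearMap.adjoint (B N) ∘L B N) r ≤
      nthEig (B N ∘L Su ∘L ContinuousLinearMap.adjoint (B N) + Ξ N) r := by
    intro N
    set G := ContinuousLinearMap.adjoint (B N) ∘L B N with hG
    set A := B N ∘L Su ∘L ContinuousLinearMap.adjoint (B N) + Ξ N with hA
    have hG_psd : ∀ z, 0 ≤ ⟪G z, z⟫ := by
      intro z
      rw [hGq]
      exact real_inner_self_nonneg
    have hg0 : 0 ≤ nthEig G r := nthEig_nonneg G hG_psd hr
    rcases hg0.eq_or_lt with h | hg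
    · rw [← h, mul_zero]
      exact nthEig_nonneg A (hA_psd N) hr
    · have hquad : ∀ z, nthEig G r * ‖z‖ ^ 2 ≤ ⟪G z, z⟫ := nthEig_quad_lb hr G
      have hinj : Function.Injective (B N) := by
        intro z w hzw
        by_contra hne
        have hzw0 : z - w ≠ 0 := sub_ne_zero.mpr hne
        have h0 : B N (z - w) = 0 := by rw [map_sub, hzw, sub_self]
        have h1 : (0:ℝ) < nthEig G r * ‖z - w‖ ^ 2 := by
          have : (0:ℝ) < ‖z - w‖ := norm_pos_iff.mpr hzw0
          positivity
        have h2 := hquad (z - w)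
        rw [hGq, h0, inner_zero_left] at h2
        linarith
      have hVr : Module.finrank ℝ (LinearMap.range ((B N) : EuclideanSpace ℝ (Fin r) →ₗ[ℝ] HN N)) = r := by
        rw [LinearMap.finrank_range_of_inj hinj, finrank_euclideanSpace_fin]
      refine le_nthEig A hr _ hVr ?_
      rintro x hx hx1
      obtain ⟨z, rfl⟩ := LinearMap.mem_range.mp hx
      have hx1' : ‖B N z‖ = 1 := hx1
      have hBtB : ContinuousLinearMap.adjoint (B N) (B N z) = G z := rfl
      have hgoal : ⟪A (B N z), B N z⟫ = ⟪Su (G z), G z⟫ + ⟪Ξ N (B N z), B N z⟫ := by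
        rw [hAq N (B N z), hBtB]
      have hzz : ⟪G z, z⟫ = 1 := by
        rw [hGq]
        rw [real_inner_self_eq_norm_sq, hx1']
        norm_num
      have hCS : ⟪G z, z⟫ ≤ ‖G z‖ * ‖z‖ := real_inner_le_norm _ _
      have hlow : nthEig G r * ‖z‖ ^ 2 ≤ 1 := by rw [← hzz]; exact hquad z
      have h2 : 1 ≤ ‖G z‖ * ‖z‖ := by rw [← hzz]; exact hCS
      have h3 : 1 ≤ ‖G z‖ ^ 2 * ‖z‖ ^ 2 := by nlinarith [norm_nonneg (G z), norm_nonneg z]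
      have hGz2 : nthEig G r ≤ ‖G z‖ ^ 2 := by
        nlinarith [mul_le_mul_of_nonneg_left h3 hg.le,
          mul_le_mul_of_nonneg_left hlow (sq_nonneg ‖G z‖)]
      have hsq : nthEig Su r * ‖G z‖ ^ 2 ≤ ⟪Su (G z), G z⟫ := nthEig_quad_lb hr Su (G z)
      have h4 : nthEig Su r * nthEig G r ≤ nthEig Su r * ‖G z‖ ^ 2 :=
        mul_le_mul_of_nonneg_left hGz2 ha.le
      have h5 := hΞ_pos N (B N z)
      show nthEig Su r * nthEig G r ≤ ⟪A (B N z), B N z⟫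
      rw [hgoal]
      linarith
  refine ⟨hmain, ?_⟩
  obtain ⟨b, hb, hlb⟩ := exists_pos_lb hr SB hSB_pd
  set e : Fin r → EuclideanSpace ℝ (Fin r) := fun l => EuclideanSpace.single l (1:ℝ) with he
  set d : ℕ → Fin r → Fin r → ℝ :=
    fun N l k => ⟪B N (e l), B N (e k)⟫ / N - ⟪SB (e l), e k⟫ with hd
  have hdlim : ∀ l k, Tendsto (fun N => d N l k) atTop (nhds 0) := by
    intro l k
    have h := (hBlim (e l) (e k)).sub_const ⟪SB (e l), e k⟫
    rw [sub_self] at h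
    exact h
  set ε : ℕ → ℝ := fun N => ∑ l, ∑ k, |d N l k| with hε
  have hεlim : Tendsto ε atTop (nhds 0) := by
    have h := tendsto_finset_sum (Finset.univ : Finset (Fin r))
      (fun l _ => tendsto_finset_sum (Finset.univ : Finset (Fin r))
        (fun k _ => (hdlim l k).abs))
    simpa using h
  obtain ⟨N₀, hN₀⟩ := Filter.eventually_atTop.mp
    (hεlim.eventually (gt_mem_nhds (half_pos hb)))
  refine ⟨nthEig Su r * (b / 2), by positivity, max N₀ 1, ?_⟩
  intro N hN
  have hN1 : 1 ≤ N := le_trans (le_max_right _ _) hN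
  have hNpos : (0:ℝ) < (N:ℝ) := by exact_mod_cast hN1
  have hεN : ε N < b / 2 := hN₀ N (le_trans (le_max_left _ _) hN)
  have hGlow : (b / 2) * N ≤ nthEig (ContinuousLinearMap.adjoint (B N) ∘L B N) r := by
    refine ge_nthEig_findim hr _ ?_
    intro z hz
    have hexp : ⟪B N z, B N z⟫ = ∑ l, ∑ k, z l * z k * ⟪B N (e l), B N (e k)⟫ :=
      bilin_expand (B N) (B N) z z
    have hexp2 : ⟪SB z, z⟫ = ∑ l, ∑ k, z l * z k * ⟪SB (e l), e k⟫ := by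
      have h := bilin_expand SB (ContinuousLinearMap.id ℝ (EuclideanSpace ℝ (Fin r))) z z
      simp only [ContinuousLinearMap.id_apply] at h
      exact h
    have hcoord : ∀ l, |z l| ≤ 1 := fun l => (abs_coord_le z l).trans_eq hz
    have hdiff : ⟪B N z, B N z⟫ / N - ⟪SB z, z⟫ = ∑ l, ∑ k, z l * z k * d N l k := by
      rw [hexp, hexp2, Finset.sum_div, ← Finset.sum_sub_distrib]
      refine Finset.sum_congr rfl fun l _ => ?_
      rw [Finset.sum_div, ← Finset.sum_sub_distrib]
      refine Finset.sum_congr rfl fun k _ => ?_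
      simp only [hd]
      ring
    have habs : |∑ l, ∑ k, z l * z k * d N l k| ≤ ε N := by
      calc |∑ l, ∑ k, z l * z k * d N l k| ≤ ∑ l, |∑ k, z l * z k * d N l k| :=
            Finset.abs_sum_le_sum_abs _ _
        _ ≤ ∑ l, ∑ k, |z l * z k * d N l k| :=
            Finset.sum_le_sum fun l _ => Finset.abs_sum_le_sum_abs _ _
        _ ≤ ∑ l, ∑ k, |d N l k| := by
            refine Finset.sum_le_sum fun l _ => Finset.sum_le_sum fun k _ => ?_
            rw [abs_mul, abs_mul]
            calc |z l| * |z k| * |d N l k| ≤ 1 * |d N l k| := by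
                  have h12 : |z l| * |z k| ≤ 1 := by
                    nlinarith [hcoord l, hcoord k, abs_nonneg (z l), abs_nonneg (z k)]
                  exact mul_le_mul_of_nonneg_right h12 (abs_nonneg _)
              _ = |d N l k| := one_mul _
    have hkey : b / 2 ≤ ⟪B N z, B N z⟫ / N := by
      have h1 := hlb z hz
      have h2 := abs_le.mp (hdiff ▸ habs)
      linarith [h2.1]
    have h3 : (b / 2) * N ≤ ⟪B N z, B N z⟫ := (le_div_iff₀ hNpos).mp hkey
    rw [hGq]
    exact h3
  have h4 : nthEig Su r * ((b / 2) * N) ≤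
      nthEig Su r * nthEig (ContinuousLinearMap.adjoint (B N) ∘L B N) r :=
    mul_le_mul_of_nonneg_left hGlow ha.le
  calc nthEig Su r * (b / 2) * N = nthEig Su r * ((b / 2) * N) := by ring
    _ ≤ nthEig Su r * nthEig (ContinuousLinearMap.adjoint (B N) ∘L B N) r := h4
    _ ≤ nthEig (B N ∘L Su ∘L ContinuousLinearMap.adjoint (B N) + Ξ N) r := hmain N
end
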